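/- arXiv:1501.03412 — 2 statements merged into one kernel-verified Lean document; each statement's English description precedes it below -/
import Mathlib

section
/- For every α > 0 with α ≠ 1, the integral ∫_{−∞}^{∞} (1−α)⁻¹ · ln( f(x)^α + (1−f(x))^α ) dx, with f(x) = (1 + e^x)⁻¹, converges and equals (π²/6) · (1+α)/α. -/
/-!
Writing `f = (1 + eˣ)⁻¹`, one has `f ^ α + (1 - f) ^ α = (1 + e^{αx}) / (1 + eˣ) ^ α`, and since
`log (1 + eᵗ) = t + log (1 + e⁻ᵗ)` the logarithm of this is `g (α |x|) - α g |x|` with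
`g y = log (1 + e⁻ʸ)`. Expanding `g y = ∑ (-1)ⁿ e^{-(n+1) y} / (n + 1)` and integrating termwise
gives `∫₀^∞ g = ∑ (-1)ⁿ / (n + 1)² = π² / 12`, hence `∫ g (b |x|) dx = π² / (6 b)`, and the
integral is `(1 - α)⁻¹ (π² / 6) (α⁻¹ - α)`.
-/

open MeasureTheory Set Real

theorem integrable_comp_abs_of_integrableOn_Ioi {E : Type*} [NormedAddCommGroup E] {f : ℝ → E}
    (hf : IntegrableOn f (Ioi 0)) : Integrable fun x => f |x| := by
  have h_pos : IntegrableOn (fun x => f |x|) (Ioi 0) :=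
    hf.congr_fun (fun x hx => by rw [abs_of_pos (mem_Ioi.mp hx)]) measurableSet_Ioi
  have h_neg : IntegrableOn (fun x => f |x|) (Iic 0) := by
    rw [← Measure.map_neg_eq_self (volume : Measure ℝ),
      (measurableEmbedding_neg (α := ℝ)).integrableOn_map_iff]
    simp_rw [Function.comp_def, abs_neg, neg_preimage, neg_Iic, neg_zero]
    rwa [integrableOn_Ici_iff_integrableOn_Ioi]
  rw [← integrableOn_univ, ← Iic_union_Ioi (a := (0 : ℝ))]
  exact h_neg.union h_pos

theorem integrableOn_Ioi_log_one_add_exp_neg :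
    IntegrableOn (fun x => log (1 + exp (-x))) (Ioi 0) := by
  have h_cont : Continuous fun x => log (1 + exp (-x)) :=
    (by fun_prop : Continuous fun x => 1 + exp (-x)).log fun x => by positivity
  refine (integrableOn_exp_neg_Ioi 0).mono' h_cont.aestronglyMeasurable (ae_of_all _ fun x => ?_)
  rw [norm_of_nonneg (log_nonneg (by linarith [exp_pos (-x)]))]
  linarith [log_le_sub_one_of_pos (by positivity : 0 < 1 + exp (-x))]

theorem hasSum_log_one_add_exp_neg {x : ℝ} (hx : 0 < x) :
    HasSum (fun n : ℕ => (-1) ^ n / (n + 1) * exp (-(n + 1) * x)) (log (1 + exp (-x))) := by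
  have h_lt : |-exp (-x)| < 1 := by
    rw [abs_neg, abs_of_pos (exp_pos _)]
    exact exp_lt_one_iff.mpr (neg_lt_zero.mpr hx)
  have h_term (n : ℕ) :
      -((-exp (-x)) ^ (n + 1) / (n + 1)) = (-1) ^ n / (n + 1) * exp (-(n + 1) * x) := by
    rw [neg_pow, ← exp_nat_mul, pow_succ]
    push_cast
    ring_nf
  simpa [h_term] using (hasSum_pow_div_log_of_abs_lt_one h_lt).neg

theorem hasSum_setIntegral_Ioi_of_hasSum_mul_exp {ι : Type*} [Countable ι] {a c : ι → ℝ}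
    {f : ℝ → ℝ} (hc : ∀ i, 0 < c i)
    (hf : ∀ x ∈ Ioi 0, HasSum (fun i => a i * exp (-c i * x)) (f x))
    (h_sum : Summable fun i => |a i| / c i) :
    HasSum (fun i => a i / c i) (∫ x in Ioi 0, f x) := by
  have h_exp i : ∫ x in Ioi 0, exp (-c i * x) = (c i)⁻¹ := by
    simpa [neg_div] using integral_exp_mul_Ioi (neg_lt_zero.mpr (hc i)) 0
  have h_int i : IntegrableOn (fun x => a i * exp (-c i * x)) (Ioi 0) :=
    (exp_neg_integrableOn_Ioi 0 (hc i)).const_mul _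
  have h_norm i : ∫ x in Ioi 0, ‖a i * exp (-c i * x)‖ = |a i| / c i := by
    simp_rw [norm_mul, norm_of_nonneg (exp_pos _).le, integral_const_mul, h_exp, Real.norm_eq_abs,
      div_eq_mul_inv]
  rw [setIntegral_congr_fun measurableSet_Ioi fun x hx => (hf x hx).tsum_eq.symm]
  simpa only [integral_const_mul, h_exp, div_eq_mul_inv] using
    hasSum_integral_of_summable_integral_norm h_int (by simpa only [h_norm] using h_sum)

theorem hasSum_one_div_succ_sq : HasSum (fun n : ℕ => 1 / ((n : ℝ) + 1) ^ 2) (π ^ 2 / 6) := by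
  simpa using (hasSum_nat_add_iff' 1).mpr hasSum_zeta_two

theorem hasSum_neg_one_pow_div_succ_sq :
    HasSum (fun n : ℕ => (-1) ^ n / ((n : ℝ) + 1) ^ 2) (π ^ 2 / 12) := by
  set a : ℕ → ℝ := fun n => 1 / ((n : ℝ) + 1) ^ 2 with ha_def
  have ha : HasSum a (π ^ 2 / 6) := hasSum_one_div_succ_sq
  -- the odd-indexed terms make up a quarter of `ζ(2)`, so the alternating sum is `ζ(2) / 2`
  have h_odd : HasSum (fun k => a (2 * k + 1)) (π ^ 2 / 24) := by
    have h_term (k : ℕ) : a (2 * k + 1) = 1 / 4 * a k := by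
      simp only [ha_def]
      push_cast
      field_simp
      ring
    simpa only [h_term, show π ^ 2 / 24 = 1 / 4 * (π ^ 2 / 6) by ring] using ha.mul_left (1 / 4)
  have h_even : HasSum (fun k => a (2 * k)) (π ^ 2 / 8) := by
    obtain ⟨s, hs⟩ : Summable fun k => a (2 * k) :=
      ha.summable.comp_injective (mul_right_injective₀ two_ne_zero)
    rwa [show s = π ^ 2 / 8 by linarith [ha.unique (hs.even_add_odd h_odd)]] at hs
  have h_sign (n : ℕ) : (-1) ^ n / ((n : ℝ) + 1) ^ 2 = (-1) ^ n * a n := by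
    simp [ha_def, div_eq_mul_inv]
  simp only [h_sign]
  convert HasSum.even_add_odd (f := fun n => (-1) ^ n * a n) (by simpa [pow_mul] using h_even)
    (by simpa [pow_succ, pow_mul] using h_odd.neg) using 1
  ring

theorem integral_Ioi_log_one_add_exp_neg : ∫ x in Ioi 0, log (1 + exp (-x)) = π ^ 2 / 12 := by
  have h_abs (n : ℕ) : |(-1) ^ n / ((n : ℝ) + 1)| / (n + 1) = 1 / ((n : ℝ) + 1) ^ 2 := by
    rw [abs_div, abs_pow, abs_neg, abs_one, one_pow, abs_of_pos (by positivity), div_div, sq]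
  have h := hasSum_setIntegral_Ioi_of_hasSum_mul_exp (fun n : ℕ => by positivity)
    (fun x hx => hasSum_log_one_add_exp_neg hx)
    (by simpa only [h_abs] using hasSum_one_div_succ_sq.summable)
  exact h.unique (by simpa only [div_div, ← sq] using hasSum_neg_one_pow_div_succ_sq)

theorem integrable_log_one_add_exp_neg_mul_abs {b : ℝ} (hb : 0 < b) :
    Integrable fun x => log (1 + exp (-(b * |x|))) :=
  integrable_comp_abs_of_integrableOn_Ioi (f := fun y => log (1 + exp (-(b * y))))
    ((integrableOn_Ioi_comp_mul_left_iff (fun y => log (1 + exp (-y))) 0 hb).mpr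
      (by simpa using integrableOn_Ioi_log_one_add_exp_neg))

theorem integral_log_one_add_exp_neg_mul_abs {b : ℝ} (hb : 0 < b) :
    ∫ x, log (1 + exp (-(b * |x|))) = π ^ 2 / 6 / b := by
  rw [integral_comp_abs (f := fun y => log (1 + exp (-(b * y)))),
    integral_comp_mul_left_Ioi (fun y => log (1 + exp (-y))) 0 hb, mul_zero,
    integral_Ioi_log_one_add_exp_neg, smul_eq_mul]
  ring

theorem log_one_add_exp (t : ℝ) : log (1 + exp t) = t + log (1 + exp (-t)) := by
  have h : 1 + exp t = exp t * (1 + exp (-t)) := by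
    rw [mul_add, mul_one, ← exp_add, add_neg_cancel, exp_zero, add_comm]
  rw [h, log_mul (exp_ne_zero t) (by positivity), log_exp]

theorem log_fermi_rpow_add_rpow (α x : ℝ) :
    log ((1 + exp x)⁻¹ ^ α + (1 - (1 + exp x)⁻¹) ^ α)
      = log (1 + exp (α * x)) - α * log (1 + exp x) := by
  have h_pos : 0 < 1 + exp x := by positivity
  have h_sum :
      (1 + exp x)⁻¹ ^ α + (1 - (1 + exp x)⁻¹) ^ α = (1 + exp (α * x)) / (1 + exp x) ^ α := by
    rw [show 1 - (1 + exp x)⁻¹ = exp x / (1 + exp x) by field_simp; ring,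
      div_rpow (exp_pos x).le h_pos.le, inv_rpow h_pos.le, ← exp_mul, mul_comm x]
    ring
  rw [h_sum, log_div (by positivity) (by positivity), log_rpow h_pos]

theorem log_fermi_rpow_add_rpow_eq_abs (α x : ℝ) :
    log ((1 + exp x)⁻¹ ^ α + (1 - (1 + exp x)⁻¹) ^ α)
      = log (1 + exp (-(α * |x|))) - α * log (1 + exp (-|x|)) := by
  rw [log_fermi_rpow_add_rpow]
  rcases le_or_gt 0 x with hx | hx
  · rw [abs_of_nonneg hx, log_one_add_exp (α * x), log_one_add_exp x]
    ring
  · rw [abs_of_neg hx, mul_neg, neg_neg, neg_neg]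

/-- For every `α > 0` with `α ≠ 1`, the integral over `ℝ` of the Rényi entropy of the
Fermi function, `∫ (1-α)⁻¹ ln (f(x)^α + (1-f(x))^α) dx` with `f(x) = (1+eˣ)⁻¹`,
converges and equals `(π²/6)·(1+α)/α`. -/
theorem integral_renyi_entropy_fermi (α : ℝ) (hα : 0 < α) (hα1 : α ≠ 1) :
    Integrable (fun x : ℝ =>
        (1 - α)⁻¹ * Real.log (((1 + Real.exp x)⁻¹) ^ α + (1 - (1 + Real.exp x)⁻¹) ^ α)) ∧
    ∫ x : ℝ,
        (1 - α)⁻¹ * Real.log (((1 + Real.exp x)⁻¹) ^ α + (1 - (1 + Real.exp x)⁻¹) ^ α)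
      = (Real.pi ^ 2 / 6) * ((1 + α) / α) := by
  simp_rw [log_fermi_rpow_add_rpow_eq_abs]
  have h_α := integrable_log_one_add_exp_neg_mul_abs hα
  have h_one : Integrable fun x => log (1 + exp (-|x|)) := by
    simpa using integrable_log_one_add_exp_neg_mul_abs one_pos
  refine ⟨(h_α.sub (h_one.const_mul α)).const_mul _, ?_⟩
  have h_one_val : ∫ x, log (1 + exp (-|x|)) = π ^ 2 / 6 := by
    simpa using integral_log_one_add_exp_neg_mul_abs one_pos
  rw [integral_const_mul, integral_sub h_α (h_one.const_mul α), integral_const_mul,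
    integral_log_one_add_exp_neg_mul_abs hα, h_one_val]
  have h_ne : 1 - α ≠ 0 := sub_ne_zero.mpr hα1.symm
  field_simp
  ring
end

section
/- Let μ ∈ ℝ and let N : ℝ → ℝ be continuously differentiable with N(E) = 0 for E ≤ 0 and |N(E)| + |N′(E)| ≤ C(1+|E|)^k for some constants C > 0, k ∈ ℕ. Then the pressure p(T) := ∫_{−∞}^{∞} N(E) · f_T(E−μ) dE is a differentiable function of T on (0,∞), and its derivative equals the thermal entropy density: p′(T) = ∫_{−∞}^{∞} N′(E) · h_1(f_T(E−μ)) dE. -/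
open MeasureTheory

/-!
Write `f_T(E - μ) = σ((μ - E) / T)` with the logistic sigmoid `σ`, so that `σ' = σ (1 - σ)`.
Since `h_1'(σ z) = -z`, the temperature derivative of the occupation is an energy derivative:
`∂_T σ((μ - E) / T) = -∂_E h_1(σ((μ - E) / T))`. Differentiating under the integral sign and
integrating by parts in `E` thus turns `p'(T) = ∫ N ∂_T f` into `∫ N' h_1(f)`. Both steps are
justified by domination: `N` and `N'` grow polynomially, while `z σ'(z)` and `h_1(σ z)` are
`O(exp (-|z| / 2))`; for `z = (μ - E) / S` this is exponential decay in `E`, locally uniformly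
in `S > 0`. The pressure integrand itself is integrable because `N` vanishes where `f_T → 1`.
-/

open Real Set Filter Topology
open scoped Nat

lemma one_add_pow_le_mul_exp (n : ℕ) {a u : ℝ} (ha : 0 < a) (hu : 0 ≤ u) :
    (1 + u) ^ n ≤ n ! / a ^ n * exp a * exp (a * u) := by
  have h := Real.pow_div_factorial_le_exp _ (by positivity : 0 ≤ a * (1 + u)) n
  rw [mul_pow, div_le_iff₀ (by positivity), mul_add, mul_one, exp_add] at h
  rw [mul_assoc, div_mul_eq_mul_div, le_div_iff₀ (by positivity)]
  linarith

lemma integrable_one_add_abs_pow_mul_exp_neg_mul_abs (k : ℕ) {a : ℝ} (ha : 0 < a) :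
    Integrable fun x : ℝ => (1 + |x|) ^ k * exp (-(a * |x|)) := by
  have hr : ((Module.finrank ℝ ℝ : ℕ) : ℝ) < 2 := by simp
  set K := (k + 2)! / a ^ (k + 2) * exp a
  refine ((integrable_one_add_norm hr).const_mul K).mono' (by fun_prop) (ae_of_all _ fun x => ?_)
  have h1 : 0 < 1 + |x| := by positivity
  rw [norm_of_nonneg (by positivity), norm_eq_abs, rpow_neg h1.le, rpow_two]
  calc (1 + |x|) ^ k * exp (-(a * |x|))
      = (1 + |x|) ^ (k + 2) * exp (-(a * |x|)) * ((1 + |x|) ^ 2)⁻¹ := by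
        field_simp; ring
    _ ≤ K * exp (a * |x|) * exp (-(a * |x|)) * ((1 + |x|) ^ 2)⁻¹ := by
        gcongr; exact one_add_pow_le_mul_exp _ ha (abs_nonneg x)
    _ = K * ((1 + |x|) ^ 2)⁻¹ := by rw [mul_assoc K, ← exp_add]; simp

lemma integrable_one_add_abs_pow_mul_exp_neg_mul_abs_sub (k : ℕ) {a : ℝ} (ha : 0 < a)
    (c : ℝ) :
    Integrable fun x : ℝ => (1 + |x|) ^ k * exp (-(a * |x - c|)) := by
  refine ((integrable_one_add_abs_pow_mul_exp_neg_mul_abs k ha).const_mul (exp (a * |c|))).mono'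
    (by fun_prop) (ae_of_all _ fun x => ?_)
  rw [norm_of_nonneg (by positivity), mul_left_comm, ← exp_add]
  gcongr
  nlinarith [abs_sub_abs_le_abs_sub x c]

lemma integrable_mul_of_abs_le_pow_of_abs_le_exp {u v : ℝ → ℝ} (hu : AEStronglyMeasurable u)
    (hv : AEStronglyMeasurable v) {C K a c : ℝ} {k : ℕ} (ha : 0 < a)
    (hub : ∀ x, |u x| ≤ C * (1 + |x|) ^ k) (hvb : ∀ x, |v x| ≤ K * exp (-(a * |x - c|))) :
    Integrable fun x => u x * v x := by
  refine ((integrable_one_add_abs_pow_mul_exp_neg_mul_abs_sub k ha c).const_mul (C * K)).mono'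
    (hu.mul hv) (ae_of_all _ fun x => ?_)
  rw [norm_mul, norm_eq_abs, norm_eq_abs]
  calc |u x| * |v x| ≤ C * (1 + |x|) ^ k * (K * exp (-(a * |x - c|))) :=
        mul_le_mul (hub x) (hvb x) (abs_nonneg _) ((abs_nonneg _).trans (hub x))
    _ = C * K * ((1 + |x|) ^ k * exp (-(a * |x - c|))) := by ring

lemma one_add_mul_exp_neg_le (u : ℝ) : (1 + u) * exp (-u) ≤ 2 * exp (-(u / 2)) :=
  calc (1 + u) * exp (-u) = (1 + u) * exp (-(u / 2)) * exp (-(u / 2)) := by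
        rw [mul_assoc, ← exp_add]; ring_nf
    _ ≤ 2 * exp (u / 2) * exp (-(u / 2)) * exp (-(u / 2)) := by
        gcongr; linarith [add_one_le_exp (u / 2)]
    _ = 2 * exp (-(u / 2)) := by rw [mul_assoc 2, ← exp_add]; simp

namespace Real

lemma inv_one_add_exp_eq_sigmoid_neg (x : ℝ) : (1 + exp x)⁻¹ = sigmoid (-x) := by
  rw [sigmoid_def, neg_neg]

lemma neg_mul_log_sub_one_sub_mul_log_eq_binEntropy (p : ℝ) :
    -(p * log p) - (1 - p) * log (1 - p) = binEntropy p := by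
  rw [binEntropy, log_inv, log_inv]
  ring

lemma sigmoid_le_exp (x : ℝ) : sigmoid x ≤ exp x := by
  rw [sigmoid_def, ← inv_inv (exp x), ← exp_neg]
  exact inv_anti₀ (exp_pos _) (le_add_of_nonneg_left zero_le_one)

lemma sigmoid_mul_one_sub_sigmoid_le (x : ℝ) : sigmoid x * (1 - sigmoid x) ≤ exp (-|x|) := by
  rw [← sigmoid_neg]
  rcases le_total 0 x with hx | hx
  · rw [abs_of_nonneg hx]
    calc sigmoid x * sigmoid (-x) ≤ 1 * exp (-x) :=
          mul_le_mul (sigmoid_le_one x) (sigmoid_le_exp _) (sigmoid_nonneg _) zero_le_one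
      _ = exp (-x) := one_mul _
  · rw [abs_of_nonpos hx, neg_neg]
    calc sigmoid x * sigmoid (-x) ≤ exp x * 1 :=
          mul_le_mul (sigmoid_le_exp x) (sigmoid_le_one _) (sigmoid_nonneg _) (exp_pos x).le
      _ = exp x := mul_one _

lemma abs_mul_sigmoid_mul_one_sub_sigmoid_le (x : ℝ) :
    |x * (sigmoid x * (1 - sigmoid x))| ≤ 2 * exp (-(|x| / 2)) := by
  have h : 0 ≤ sigmoid x * (1 - sigmoid x) := mul_nonneg (sigmoid_nonneg x) (by
    linarith [sigmoid_le_one x])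
  rw [abs_mul, abs_of_nonneg h]
  calc |x| * (sigmoid x * (1 - sigmoid x)) ≤ (1 + |x|) * exp (-|x|) := by
        gcongr
        · linarith
        · exact sigmoid_mul_one_sub_sigmoid_le x
    _ ≤ 2 * exp (-(|x| / 2)) := one_add_mul_exp_neg_le _

lemma log_inv_sigmoid (x : ℝ) : log (sigmoid x)⁻¹ = log (1 + exp (-x)) := by
  rw [sigmoid_def, inv_inv]

lemma binEntropy_sigmoid_neg (x : ℝ) : binEntropy (sigmoid (-x)) = binEntropy (sigmoid x) := by
  rw [sigmoid_neg, binEntropy_one_sub]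

lemma binEntropy_sigmoid_le (x : ℝ) : binEntropy (sigmoid x) ≤ 2 * exp (-(|x| / 2)) := by
  refine le_trans ?_ (one_add_mul_exp_neg_le |x|)
  wlog hx : 0 ≤ x generalizing x
  · simpa [binEntropy_sigmoid_neg] using this (-x) (by linarith)
  set L := log (1 + exp (-x))
  have hL : L ≤ exp (-x) := by
    linarith [log_le_sub_one_of_pos (by positivity : 0 < 1 + exp (-x))]
  have hL' : log (1 + exp (- -x)) = x + L := by
    have h : 1 + exp x = exp x * (1 + exp (-x)) := by
      rw [mul_add, mul_one, ← exp_add, add_neg_cancel, exp_zero, add_comm]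
    rw [neg_neg, h, log_mul (by positivity) (by positivity), log_exp]
  rw [binEntropy, ← sigmoid_neg, log_inv_sigmoid, log_inv_sigmoid, hL', abs_of_nonneg hx]
  calc sigmoid x * L + sigmoid (-x) * (x + L) = L + x * sigmoid (-x) := by
        rw [sigmoid_neg]; ring
    _ ≤ exp (-x) + x * exp (-x) := by gcongr; exact sigmoid_le_exp _
    _ = (1 + x) * exp (-x) := by ring

lemma hasDerivAt_binEntropy_sigmoid (x : ℝ) :
    HasDerivAt (fun x => binEntropy (sigmoid x)) (-(x * (sigmoid x * (1 - sigmoid x)))) x := by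
  have h := (hasDerivAt_binEntropy (sigmoid_pos x).ne' (sigmoid_lt_one x).ne).comp x
    (hasDerivAt_sigmoid x)
  refine h.congr_deriv ?_
  rw [← sigmoid_neg, ← sigmoid_mul_rexp_neg, log_mul (sigmoid_pos x).ne' (exp_pos _).ne',
    log_exp]
  ring

lemma hasDerivAt_sigmoid_div (y : ℝ) {S : ℝ} (hS : S ≠ 0) :
    HasDerivAt (fun S => sigmoid (y / S))
      (-(y / S * (sigmoid (y / S) * (1 - sigmoid (y / S))) / S)) S := by
  have h := (hasDerivAt_sigmoid (y / S)).comp S ((hasDerivAt_inv hS).const_mul y)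
  refine h.congr_deriv ?_
  field_simp

end Real

section Pressure

variable {N : ℝ → ℝ} {C : ℝ} {k : ℕ} (μ : ℝ) {T : ℝ}

lemma hasDerivAt_binEntropy_sigmoid_sub_div (E : ℝ) :
    HasDerivAt (fun E => binEntropy (sigmoid ((μ - E) / T)))
      ((μ - E) / T * (sigmoid ((μ - E) / T) * (1 - sigmoid ((μ - E) / T))) / T) E := by
  have h := (hasDerivAt_binEntropy_sigmoid _).comp E
    (((hasDerivAt_id E).const_sub μ).div_const T)
  refine h.congr_deriv ?_
  simp only [id]
  ring

lemma integrable_mul_sigmoid_sub_div (hN : Continuous N) (hN0 : ∀ E ≤ 0, N E = 0)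
    (hbd : ∀ E, |N E| ≤ C * (1 + |E|) ^ k) (hT : 0 < T) :
    Integrable fun E => N E * sigmoid ((μ - E) / T) := by
  have hC : 0 ≤ C := by simpa using (abs_nonneg _).trans (hbd 0)
  refine ((integrable_one_add_abs_pow_mul_exp_neg_mul_abs k (inv_pos.2 hT)).const_mul
    (C * exp (|μ| / T))).mono' (by fun_prop) (ae_of_all _ fun E => ?_)
  rcases le_or_gt E 0 with hE | hE
  · rw [hN0 E hE, zero_mul, norm_zero]
    positivity
  have hσ : sigmoid ((μ - E) / T) ≤ exp (|μ| / T) * exp (-(T⁻¹ * |E|)) := by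
    rw [← exp_add, abs_of_pos hE]
    refine (sigmoid_le_exp _).trans (exp_le_exp.2 ?_)
    have h1 : μ / T ≤ |μ| / T := div_le_div_of_nonneg_right (le_abs_self μ) hT.le
    have h2 : (μ - E) / T = μ / T - T⁻¹ * E := by ring
    linarith
  rw [norm_mul, norm_eq_abs, norm_of_nonneg (sigmoid_nonneg _)]
  calc |N E| * sigmoid ((μ - E) / T)
      ≤ C * (1 + |E|) ^ k * (exp (|μ| / T) * exp (-(T⁻¹ * |E|))) :=
        mul_le_mul (hbd E) hσ (sigmoid_nonneg _) (by positivity)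
    _ = C * exp (|μ| / T) * ((1 + |E|) ^ k * exp (-(T⁻¹ * |E|))) := by ring

lemma hasDerivAt_integral_mul_sigmoid_sub_div (hN : Continuous N) (hN0 : ∀ E ≤ 0, N E = 0)
    (hbd : ∀ E, |N E| ≤ C * (1 + |E|) ^ k) (hT : 0 < T) :
    HasDerivAt (fun S => ∫ E, N E * sigmoid ((μ - E) / S))
      (∫ E, N E * -((μ - E) / T * (sigmoid ((μ - E) / T) * (1 - sigmoid ((μ - E) / T))) / T))
      T := by
  have hnhds : Ioo (T / 2) (2 * T) ∈ 𝓝 T := Ioo_mem_nhds (by linarith) (by linarith)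
  have hbound : ∀ E, ∀ S ∈ Ioo (T / 2) (2 * T),
      ‖N E * -((μ - E) / S * (sigmoid ((μ - E) / S) * (1 - sigmoid ((μ - E) / S))) / S)‖
        ≤ 4 * C / T * ((1 + |E|) ^ k * exp (-((4 * T)⁻¹ * |E - μ|))) := by
    rintro E S ⟨hS1, hS2⟩
    have hS : 0 < S := by linarith
    have hdecay : exp (-(|(μ - E) / S| / 2)) ≤ exp (-((4 * T)⁻¹ * |E - μ|)) := by
      rw [abs_div, abs_of_pos hS, abs_sub_comm]
      gcongr
      rw [div_div, inv_mul_eq_div]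
      exact div_le_div_of_nonneg_left (abs_nonneg _) (by positivity) (by linarith)
    rw [norm_mul, norm_neg, norm_div, norm_eq_abs, norm_eq_abs, norm_of_nonneg hS.le]
    calc |N E| * (|(μ - E) / S * (sigmoid ((μ - E) / S) * (1 - sigmoid ((μ - E) / S)))| / S)
        ≤ C * (1 + |E|) ^ k * (2 * exp (-((4 * T)⁻¹ * |E - μ|)) / (T / 2)) := by
          refine mul_le_mul (hbd E) (div_le_div₀ (by positivity) ?_ (by positivity) hS1.le)
            (by positivity) ((abs_nonneg _).trans (hbd E))
          exact (abs_mul_sigmoid_mul_one_sub_sigmoid_le _).trans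
            (mul_le_mul_of_nonneg_left hdecay zero_le_two)
      _ = 4 * C / T * ((1 + |E|) ^ k * exp (-((4 * T)⁻¹ * |E - μ|))) := by
          field_simp; ring
  exact (hasDerivAt_integral_of_dominated_loc_of_deriv_le hnhds
    (Eventually.of_forall fun S => by fun_prop) (integrable_mul_sigmoid_sub_div μ hN hN0 hbd hT)
    (by fun_prop) (ae_of_all _ hbound)
    ((integrable_one_add_abs_pow_mul_exp_neg_mul_abs_sub k (by positivity) μ).const_mul _)
    (ae_of_all _ fun E S hS => (hasDerivAt_sigmoid_div _ (by linarith [hS.1] : S ≠ 0)).const_mul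
      (N E))).2

lemma integral_mul_deriv_binEntropy_sigmoid_sub_div (hN : ContDiff ℝ 1 N)
    (hbd : ∀ E, |N E| ≤ C * (1 + |E|) ^ k) (hbd' : ∀ E, |deriv N E| ≤ C * (1 + |E|) ^ k)
    (hT : 0 < T) :
    ∫ E, N E * ((μ - E) / T * (sigmoid ((μ - E) / T) * (1 - sigmoid ((μ - E) / T))) / T)
      = -∫ E, deriv N E * binEntropy (sigmoid ((μ - E) / T)) := by
  have hz : ∀ E, |(μ - E) / T| / 2 = (2 * T)⁻¹ * |E - μ| := fun E => by
    rw [abs_div, abs_of_pos hT, abs_sub_comm]; ring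
  have hH : ∀ E, |binEntropy (sigmoid ((μ - E) / T))| ≤ 2 * exp (-((2 * T)⁻¹ * |E - μ|)) :=
    fun E => by
      rw [abs_of_nonneg (binEntropy_nonneg (sigmoid_nonneg _) (sigmoid_le_one _)), ← hz]
      exact binEntropy_sigmoid_le _
  have hH' : ∀ E, |(μ - E) / T * (sigmoid ((μ - E) / T) * (1 - sigmoid ((μ - E) / T))) / T|
      ≤ 2 / T * exp (-((2 * T)⁻¹ * |E - μ|)) := fun E => by
    rw [abs_div, abs_of_pos hT, div_mul_eq_mul_div (2 : ℝ) T, ← hz]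
    exact div_le_div_of_nonneg_right (abs_mul_sigmoid_mul_one_sub_sigmoid_le _) hT.le
  have hNm : AEStronglyMeasurable N := hN.continuous.aestronglyMeasurable
  have hN'm : AEStronglyMeasurable (deriv N) := (hN.continuous_deriv le_rfl).aestronglyMeasurable
  exact integral_mul_deriv_eq_deriv_mul_of_integrable
    (fun E _ => (hN.differentiable one_ne_zero E).hasDerivAt)
    (fun E _ => hasDerivAt_binEntropy_sigmoid_sub_div μ E)
    (integrable_mul_of_abs_le_pow_of_abs_le_exp hNm (by fun_prop) (by positivity) hbd hH')
    (integrable_mul_of_abs_le_pow_of_abs_le_exp hN'm (by fun_prop) (by positivity) hbd' hH)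
    (integrable_mul_of_abs_le_pow_of_abs_le_exp hNm (by fun_prop) (by positivity) hbd hH)

theorem hasDerivAt_integral_mul_sigmoid_eq_integral_deriv_mul_binEntropy (hN : ContDiff ℝ 1 N)
    (hN0 : ∀ E ≤ 0, N E = 0) (hbd : ∀ E, |N E| ≤ C * (1 + |E|) ^ k)
    (hbd' : ∀ E, |deriv N E| ≤ C * (1 + |E|) ^ k) (hT : 0 < T) :
    HasDerivAt (fun S => ∫ E, N E * sigmoid ((μ - E) / S))
      (∫ E, deriv N E * binEntropy (sigmoid ((μ - E) / T))) T := by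
  have h := hasDerivAt_integral_mul_sigmoid_sub_div μ hN.continuous hN0 hbd hT
  simpa only [mul_neg, integral_neg, neg_neg,
    integral_mul_deriv_binEntropy_sigmoid_sub_div μ hN hbd hbd' hT] using h

end Pressure

theorem pressure_hasDerivAt_entropy_density_general (μ : ℝ) (N : ℝ → ℝ)
    (hN : ContDiff ℝ 1 N) (hN0 : ∀ E ≤ (0 : ℝ), N E = 0)
    (C : ℝ) (k : ℕ)
    (hbd : ∀ E : ℝ, |N E| + |deriv N E| ≤ C * (1 + |E|) ^ k) :
    ∀ T : ℝ, 0 < T →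
      HasDerivAt (fun S : ℝ => ∫ E : ℝ, N E * (1 + Real.exp ((E - μ) / S))⁻¹)
        (∫ E : ℝ, deriv N E *
          (-((1 + Real.exp ((E - μ) / T))⁻¹ * Real.log ((1 + Real.exp ((E - μ) / T))⁻¹))
            - (1 - (1 + Real.exp ((E - μ) / T))⁻¹)
              * Real.log (1 - (1 + Real.exp ((E - μ) / T))⁻¹))) T := by
  intro T hT
  simp only [inv_one_add_exp_eq_sigmoid_neg, ← neg_div, neg_sub,
    neg_mul_log_sub_one_sub_mul_log_eq_binEntropy]
  exact hasDerivAt_integral_mul_sigmoid_eq_integral_deriv_mul_binEntropy μ hN hN0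
    (fun E => (le_add_of_nonneg_right (abs_nonneg _)).trans (hbd E))
    (fun E => (le_add_of_nonneg_left (abs_nonneg _)).trans (hbd E)) hT

/-- The derivative of the pressure is the thermal entropy density: for `μ ∈ ℝ` and a
`C¹` integrated density of states `N` vanishing on `(-∞,0]` and of polynomial growth
(together with its derivative), the pressure `p(T) = ∫ N(E) f_T(E-μ) dE` is
differentiable on `(0,∞)` with `p′(T) = ∫ N′(E) h_1(f_T(E-μ)) dE`, where
`f_T(E) = (1+exp(E/T))⁻¹` and `h_1(t) = -t ln t - (1-t) ln(1-t)`. -/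
theorem pressure_hasDerivAt_entropy_density (μ : ℝ) (N : ℝ → ℝ)
    (hN : ContDiff ℝ 1 N) (hN0 : ∀ E ≤ (0 : ℝ), N E = 0)
    (C : ℝ) (k : ℕ) (hC : 0 < C)
    (hbd : ∀ E : ℝ, |N E| + |deriv N E| ≤ C * (1 + |E|) ^ k) :
    ∀ T : ℝ, 0 < T →
      HasDerivAt (fun S : ℝ => ∫ E : ℝ, N E * (1 + Real.exp ((E - μ) / S))⁻¹)
        (∫ E : ℝ, deriv N E *
          (-((1 + Real.exp ((E - μ) / T))⁻¹ * Real.log ((1 + Real.exp ((E - μ) / T))⁻¹))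
            - (1 - (1 + Real.exp ((E - μ) / T))⁻¹)
              * Real.log (1 - (1 + Real.exp ((E - μ) / T))⁻¹))) T :=
  pressure_hasDerivAt_entropy_density_general μ N hN hN0 C k hbd
end
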